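/- arXiv:0808.0277 — 2 statements merged into one kernel-verified Lean document; each statement's English description precedes it below -/
import Mathlib

section
/- Let G be a free group with basis g₁, …, g_n, let H be a free group, let φ, ψ : G → H be homomorphisms, and let u, v ∈ H. Let Ĝ = G ∗ ⟨z⟩ and Ĥ = H ∗ ⟨z⟩, let φ̂_u : Ĝ → Ĥ extend φ with φ̂_u(z) = u z u⁻¹, let ψ̂ : Ĝ → Ĥ extend ψ with ψ̂(z) = z, and let φ̂_u^v(x) = v⁻¹ φ̂_u(x) v. If the homomorphism φ̂_u^v ∗ ψ̂ : Ĝ ∗ Ĝ → Ĥ has remnant, then u and v are in different doubly-twisted conjugacy classes, i.e., there is no g ∈ G with v = φ(g) u ψ(g)⁻¹. -/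
/-! Basic definitions: cancellation in products of reduced words, remnant
of a homomorphism of free groups, and assorted constructions. -/

open FreeGroup

/-- `bpow w e` is `w` if `e = true` (exponent `+1`) and `w⁻¹` if `e = false`
(exponent `-1`). -/
def bpow {β : Type*} (w : FreeGroup β) (e : Bool) : FreeGroup β := if e then w else w⁻¹

/-- The number of letters cancelled between `a` and `b` when the product `a * b`
is brought to reduced form: `(|a| + |b| - |a * b|) / 2`. -/
def cancel {β : Type*} [DecidableEq β] (a b : FreeGroup β) : ℕ :=
  (FreeGroup.norm a + FreeGroup.norm b - FreeGroup.norm (a * b)) / 2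

/-- The maximal number of letters of the reduced word `η(gᵢ)` cancelled on its left
in a product `η(gⱼ)^ε * η(gᵢ)`, over all `j` and `ε = ±1` except `j = i, ε = -1`. -/
def maxLeftCancel {α β : Type*} [Fintype α] [DecidableEq α] [DecidableEq β]
    (η : FreeGroup α →* FreeGroup β) (i : α) : ℕ :=
  (Finset.univ.filter fun je : α × Bool => je ≠ (i, false)).sup
    fun je => cancel (bpow (η (FreeGroup.of je.1)) je.2) (η (FreeGroup.of i))

/-- The maximal number of letters of the reduced word `η(gᵢ)` cancelled on its right
in a product `η(gᵢ) * η(gⱼ)^ε`, over all `j` and `ε = ±1` except `j = i, ε = -1`. -/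
def maxRightCancel {α β : Type*} [Fintype α] [DecidableEq α] [DecidableEq β]
    (η : FreeGroup α →* FreeGroup β) (i : α) : ℕ :=
  (Finset.univ.filter fun je : α × Bool => je ≠ (i, false)).sup
    fun je => cancel (η (FreeGroup.of i)) (bpow (η (FreeGroup.of je.1)) je.2)

/-- `η` has remnant: for each generator `gᵢ`, the maximal left cancellation plus the
maximal right cancellation is strictly less than the length of `η(gᵢ)`, so a nonempty
middle subword (the remnant `Rem_η(gᵢ)`) always survives. -/
def HasRemnant {α β : Type*} [Fintype α] [DecidableEq α] [DecidableEq β]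
    (η : FreeGroup α →* FreeGroup β) : Prop :=
  ∀ i : α, maxLeftCancel η i + maxRightCancel η i < FreeGroup.norm (η (FreeGroup.of i))

/-- The length `|Rem_η(gᵢ)|` of the remnant word of `gᵢ`: the part of `η(gᵢ)` surviving
all maximal cancellations. -/
def remnantLength {α β : Type*} [Fintype α] [DecidableEq α] [DecidableEq β]
    (η : FreeGroup α →* FreeGroup β) (i : α) : ℕ :=
  FreeGroup.norm (η (FreeGroup.of i)) - maxLeftCancel η i - maxRightCancel η i

/-- The remnant `Rem_η(gᵢ)` occupies positions `[maxLeftCancel η i, |η(gᵢ)| - maxRightCancel η i)`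
of the reduced word `η(gᵢ)`.  It does not fully cancel in the reduced form of the product
`η(gᵢ) * w` iff the number of letters cancelled from the right end of `η(gᵢ)`, namely
`cancel (η(gᵢ)) w`, leaves some remnant letter alive. -/
def remnantSurvivesRightMul {α β : Type*} [Fintype α] [DecidableEq α] [DecidableEq β]
    (η : FreeGroup α →* FreeGroup β) (i : α) (w : FreeGroup β) : Prop :=
  cancel (η (FreeGroup.of i)) w + maxLeftCancel η i < FreeGroup.norm (η (FreeGroup.of i))

/-- The remnant `Rem_η(gᵢ)` does not fully cancel in the reduced form of the
product `w * η(gᵢ)`. -/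
def remnantSurvivesLeftMul {α β : Type*} [Fintype α] [DecidableEq α] [DecidableEq β]
    (η : FreeGroup α →* FreeGroup β) (i : α) (w : FreeGroup β) : Prop :=
  cancel w (η (FreeGroup.of i)) + maxRightCancel η i < FreeGroup.norm (η (FreeGroup.of i))

/-- The homomorphism `φ ∗ ψ : G ∗ G → H` on the free product `G ∗ G`, realized as the
free group on `α ⊕ α`, sending the generators of the first factor via `φ` and those of
the second factor via `ψ`. -/
def prodHom {α β : Type*} (φ ψ : FreeGroup α →* FreeGroup β) :
    FreeGroup (α ⊕ α) →* FreeGroup β :=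
  FreeGroup.lift (Sum.elim (fun i => φ (FreeGroup.of i)) (fun i => ψ (FreeGroup.of i)))

/-- `φ^v : g ↦ v⁻¹ φ(g) v`. -/
def conjHom {G H : Type*} [Group G] [Group H] (φ : G →* H) (v : H) : G →* H :=
  ((MulAut.conj v⁻¹).toMonoidHom).comp φ

/-- The equalizer subgroup `Eq(φ, ψ) = {g : φ g = ψ g}`. -/
def eqSubgroup {G H : Type*} [Group G] [Group H] (φ ψ : G →* H) : Subgroup G where
  carrier := {g | φ g = ψ g}
  one_mem' := by simp
  mul_mem' := by
    intro a b ha hb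
    simp only [Set.mem_setOf_eq] at *
    rw [_root_.map_mul, _root_.map_mul, ha, hb]
  inv_mem' := by
    intro a ha
    simp only [Set.mem_setOf_eq] at *
    rw [_root_.map_inv, _root_.map_inv, ha]

/-- The canonical embedding of the free group `H` on `β` into `H ∗ ⟨z⟩`, the free group
on `β ⊕ Unit`. -/
def iotaZ {β : Type*} : FreeGroup β →* FreeGroup (β ⊕ Unit) :=
  FreeGroup.lift fun b => FreeGroup.of (Sum.inl b)

/-- The generator `z` of the infinite cyclic free factor of `H ∗ ⟨z⟩`, the free group
on `β ⊕ Unit`. -/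
def zGen (β : Type*) : FreeGroup (β ⊕ Unit) := FreeGroup.of (Sum.inr ())

/-- The extension `φ̂ᵤ : G ∗ ⟨z⟩ → H ∗ ⟨z⟩` of `φ : G → H` with `φ̂ᵤ(z) = u z u⁻¹`,
for free groups `G` (on `α`) and `H` (on `β`). -/
def hatPhiF {α β : Type*} (φ : FreeGroup α →* FreeGroup β) (u : FreeGroup β) :
    FreeGroup (α ⊕ Unit) →* FreeGroup (β ⊕ Unit) :=
  FreeGroup.lift (Sum.elim (fun i => iotaZ (φ (FreeGroup.of i)))
    (fun _ => iotaZ u * zGen β * (iotaZ u)⁻¹))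

/-- The extension `ψ̂ : G ∗ ⟨z⟩ → H ∗ ⟨z⟩` of `ψ : G → H` with `ψ̂(z) = z`. -/
def hatPsiF {α β : Type*} (ψ : FreeGroup α →* FreeGroup β) :
    FreeGroup (α ⊕ Unit) →* FreeGroup (β ⊕ Unit) :=
  FreeGroup.lift (Sum.elim (fun i => iotaZ (ψ (FreeGroup.of i))) (fun _ => zGen β))

/-!
If `v = φ(g) u ψ(g)⁻¹`, then `w = g z g⁻¹ ≠ 1` satisfies `φ̂ᵤᵛ(w) = ψ̂(w)`, so the copies of `w` in
the two factors of `Ĝ ∗ Ĝ` have the same image under `φ̂ᵤᵛ ∗ ψ̂`. This is impossible because a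
homomorphism `η` of free groups with remnant is injective: if `x` is reduced with last letter `s`,
the reduced form of `η(x)` ends with `η(s)` minus at most its maximal left cancellation. Appending
a letter `t` cancels at most the maximal right cancellation of `η(s)`, which by the remnant
condition stops strictly inside `η(s)`, so the invariant passes to `xt`, and `η(x)` is never `1`.
-/

namespace FreeGroup

variable {β : Type*}

theorem exists_eq_append_invRev_of_isReduced {A B : List (β × Bool)} (hA : IsReduced A)
    (hB : IsReduced B) : ∃ P Q R, A = P ++ invRev Q ∧ B = Q ++ R ∧ IsReduced (P ++ R) := by
  induction B generalizing A with
  | nil => exact ⟨A, [], [], by simp [invRev], rfl, by simpa using hA⟩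
  | cons b B ih =>
    rcases A.eq_nil_or_concat' with rfl | ⟨A, a, rfl⟩
    · exact ⟨[], [], b :: B, by simp [invRev], rfl, hB⟩
    by_cases hab : a.1 = b.1 → a.2 = b.2
    · refine ⟨A ++ [a], [], b :: B, by simp [invRev], rfl, ?_⟩
      simpa using
        hA.append_overlap (L₂ := [a]) (L₃ := b :: B) (isReduced_cons_cons.2 ⟨hab, hB⟩) (by simp)
    · obtain ⟨P, Q, R, rfl, rfl, hPR⟩ :=
        ih (hA.infix ⟨[], [a], rfl⟩) (hB.infix ⟨[b], [], by simp⟩)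
      have ha : a = (b.1, !b.2) := by
        obtain ⟨h1, h2⟩ := Classical.not_imp.1 hab
        exact Prod.ext h1 (by simpa [Bool.eq_not] using h2)
      exact ⟨P, b :: Q, R, by simp [invRev, ha], rfl, hPR⟩

variable [DecidableEq β]

theorem red_invRev_append_nil (Q : List (β × Bool)) : Red (invRev Q ++ Q) [] := by
  simpa [reduce_invRev_left_cancel] using reduce.red (L := invRev Q ++ Q)

theorem toWord_mul_eq_append {x y : FreeGroup β} {P Q R : List (β × Bool)}
    (hx : x.toWord = P ++ invRev Q) (hy : y.toWord = Q ++ R) (hPR : IsReduced (P ++ R)) :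
    (x * y).toWord = P ++ R := by
  have hred : Red (P ++ (invRev Q ++ Q) ++ R) (P ++ R) := by
    simpa using (Red.refl.append_append (red_invRev_append_nil Q)).append_append Red.refl
  rw [toWord_mul, hx, hy, ← hPR.reduce_eq, ← reduce.eq_of_red hred]
  simp

theorem cancel_eq_length {x y : FreeGroup β} {P Q R : List (β × Bool)}
    (hx : x.toWord = P ++ invRev Q) (hy : y.toWord = Q ++ R) (hPR : IsReduced (P ++ R)) :
    cancel x y = Q.length := by
  have hxy := toWord_mul_eq_append hx hy hPR
  simp only [cancel, norm, hx, hy, hxy, List.length_append, invRev_length]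
  omega

theorem exists_toWord_mul_eq_append_drop {x a b : FreeGroup β} {U : List (β × Bool)} {d : ℕ}
    (hx : x.toWord = U ++ a.toWord.drop d) (hd : d + cancel a b < a.norm) :
    ∃ U', (x * b).toWord = U' ++ b.toWord.drop (cancel a b) := by
  obtain ⟨P, Q, R, ha, hb, hPR⟩ :=
    exists_eq_append_invRev_of_isReduced (isReduced_toWord (x := a)) (isReduced_toWord (x := b))
  rw [cancel_eq_length ha hb hPR] at hd ⊢
  have hdP : d < P.length := by
    simp only [norm, ha, List.length_append, invRev_length] at hd
    omega
  have hx' : x.toWord = U ++ P.drop d ++ invRev Q := by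
    rw [hx, ha, List.drop_append_of_le_length hdP.le, List.append_assoc]
  have hsuffix : P.drop d ++ R <:+: P ++ R :=
    ⟨P.take d, [], by rw [List.append_nil, ← List.append_assoc, List.take_append_drop]⟩
  have hred : IsReduced (U ++ P.drop d ++ R) :=
    (isReduced_toWord.infix ⟨[], invRev Q, by rw [hx']; rfl⟩).append_overlap
      (hPR.infix hsuffix) (by simpa using hdP)
  exact ⟨U ++ P.drop d, by rw [toWord_mul_eq_append hx' hb hred, hb, List.drop_left]⟩

theorem cancel_eq_cancel_inv (a b : FreeGroup β) : cancel a b = cancel b⁻¹ a⁻¹ := by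
  rw [cancel, cancel, norm_inv_eq, norm_inv_eq, ← mul_inv_rev, norm_inv_eq, Nat.add_comm]

end FreeGroup

theorem bpow_inv {β : Type*} (w : FreeGroup β) (e : Bool) : (bpow w e)⁻¹ = bpow w (!e) := by
  cases e <;> simp [bpow]

theorem map_mk_singleton {α β : Type*} (η : FreeGroup α →* FreeGroup β) (s : α × Bool) :
    η (mk [s]) = bpow (η (of s.1)) s.2 := by
  obtain ⟨i, _ | _⟩ := s
  · rw [bpow, if_neg Bool.false_ne_true, ← _root_.map_inv]; rfl
  · rfl

section Remnant

variable {α β : Type*} [Fintype α] [DecidableEq α] [DecidableEq β]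
  (η : FreeGroup α →* FreeGroup β)

/-- For an inverse letter `(i, false)` the image `η(gᵢ)⁻¹` begins with the inverted right end
of `η(gᵢ)`. -/
def leftCancelBound (s : α × Bool) : ℕ :=
  if s.2 then maxLeftCancel η s.1 else maxRightCancel η s.1

def rightCancelBound (s : α × Bool) : ℕ := leftCancelBound η (s.1, !s.2)

theorem cancel_map_le_leftCancelBound {s t : α × Bool} (hst : s.1 = t.1 → s.2 = t.2) :
    cancel (η (mk [s])) (η (mk [t])) ≤ leftCancelBound η t := by
  obtain ⟨i, e⟩ := s
  obtain ⟨j, _ | _⟩ := t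
  · rw [map_mk_singleton, map_mk_singleton, cancel_eq_cancel_inv, bpow_inv, bpow_inv]
    refine Finset.le_sup (f := fun je : α × Bool => cancel (η (of j)) (bpow (η (of je.1)) je.2))
      (b := (i, !e)) ?_
    simp only [Finset.mem_filter, Finset.mem_univ, true_and, ne_eq, Prod.mk.injEq]
    rintro ⟨rfl, he⟩
    simp_all
  · rw [map_mk_singleton, map_mk_singleton]
    refine Finset.le_sup (f := fun je : α × Bool => cancel (bpow (η (of je.1)) je.2) (η (of j)))
      (b := (i, e)) ?_
    simp only [Finset.mem_filter, Finset.mem_univ, true_and, ne_eq, Prod.mk.injEq]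
    rintro ⟨rfl, rfl⟩
    simp_all

theorem cancel_map_le_rightCancelBound {s t : α × Bool} (hst : s.1 = t.1 → s.2 = t.2) :
    cancel (η (mk [s])) (η (mk [t])) ≤ rightCancelBound η s := by
  rw [cancel_eq_cancel_inv, ← _root_.map_inv, ← _root_.map_inv, FreeGroup.inv_mk,
    FreeGroup.inv_mk]
  exact cancel_map_le_leftCancelBound η fun h => by simp [hst h.symm]

namespace HasRemnant

variable {η}

theorem leftCancelBound_add_rightCancelBound_lt (h : HasRemnant η) (s : α × Bool) :
    leftCancelBound η s + rightCancelBound η s < norm (η (mk [s])) := by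
  obtain ⟨i, _ | _⟩ := s
  · simpa [leftCancelBound, rightCancelBound, map_mk_singleton, bpow, add_comm] using h i
  · simpa [leftCancelBound, rightCancelBound, map_mk_singleton, bpow] using h i

theorem exists_toWord_map_eq_append_drop (h : HasRemnant η) (L : List (α × Bool)) :
    ∀ s, IsReduced (L ++ [s]) → ∃ U, ∃ d ≤ leftCancelBound η s,
      (η (mk (L ++ [s]))).toWord = U ++ (η (mk [s])).toWord.drop d := by
  induction L using List.reverseRecOn with
  | nil => exact fun s _ => ⟨[], 0, Nat.zero_le _, by simp⟩
  | append_singleton L t ih =>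
    intro s hL
    obtain ⟨U, d, hd, hU⟩ := ih t (hL.infix ⟨[], [s], by simp⟩)
    have hts : t.1 = s.1 → t.2 = s.2 := by
      have hinfix : [t, s] <:+: L ++ [t] ++ [s] := ⟨L, [], by simp⟩
      exact (isReduced_cons_cons.1 (hL.infix hinfix)).1
    have hsurvive : d + cancel (η (mk [t])) (η (mk [s])) < norm (η (mk [t])) := by
      have := h.leftCancelBound_add_rightCancelBound_lt t
      have := cancel_map_le_rightCancelBound η hts
      omega
    obtain ⟨U', hU'⟩ := exists_toWord_mul_eq_append_drop hU hsurvive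
    refine ⟨U', _, cancel_map_le_leftCancelBound η hts, ?_⟩
    rwa [← mul_mk, _root_.map_mul]

theorem injective (h : HasRemnant η) : Function.Injective η := by
  refine (injective_iff_map_eq_one η).2 fun x hx => ?_
  rcases x.toWord.eq_nil_or_concat' with hnil | ⟨L, s, hL⟩
  · exact toWord_eq_nil_iff.1 hnil
  obtain ⟨U, d, hd, hU⟩ := h.exists_toWord_map_eq_append_drop L s (hL ▸ isReduced_toWord)
  rw [← hL, mk_toWord, hx, toWord_one] at hU
  have hdrop := (List.append_eq_nil_iff.1 hU.symm).2
  have := h.leftCancelBound_add_rightCancelBound_lt s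
  simp only [List.drop_eq_nil_iff] at hdrop
  simp only [FreeGroup.norm] at this
  omega

end HasRemnant

end Remnant

namespace FreeGroup

theorem eq_one_of_map_inl_eq_map_inr {γ : Type*} {w : FreeGroup γ}
    (h : map (Sum.inl : γ → γ ⊕ γ) w = map Sum.inr w) : w = 1 := by
  have hretract : ∀ x : FreeGroup γ, lift (Sum.elim of 1) (map (Sum.inl : γ → γ ⊕ γ) x) = x ∧
      lift (Sum.elim of 1) (map (Sum.inr : γ → γ ⊕ γ) x) = 1 := by
    intro x
    induction x using FreeGroup.induction_on <;> simp_all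
  simpa [hretract] using congrArg (lift (Sum.elim of 1)) h

end FreeGroup

section ProdHom

variable {α β : Type*} (φ ψ : FreeGroup α →* FreeGroup β)

@[simp]
theorem prodHom_map_inl (x : FreeGroup α) : prodHom φ ψ (map Sum.inl x) = φ x := by
  induction x using FreeGroup.induction_on <;> simp_all [prodHom]

@[simp]
theorem prodHom_map_inr (x : FreeGroup α) : prodHom φ ψ (map Sum.inr x) = ψ x := by
  induction x using FreeGroup.induction_on <;> simp_all [prodHom]

theorem eqSubgroup_eq_bot_of_hasRemnant_prodHom [Fintype α] [DecidableEq α] [DecidableEq β]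
    (h : HasRemnant (prodHom φ ψ)) : eqSubgroup φ ψ = ⊥ := by
  refine (Subgroup.eq_bot_iff_forall _).2 fun w hw => eq_one_of_map_inl_eq_map_inr ?_
  apply h.injective
  rwa [prodHom_map_inl, prodHom_map_inr]

end ProdHom

@[simp]
theorem conjHom_apply {G H : Type*} [Group G] [Group H] (φ : G →* H) (v : H) (x : G) :
    conjHom φ v x = v⁻¹ * φ x * v := by
  simp [conjHom]

section Hat

variable {α β : Type*}

@[simp]
theorem hatPhiF_iotaZ (φ : FreeGroup α →* FreeGroup β) (u : FreeGroup β) (x : FreeGroup α) :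
    hatPhiF φ u (iotaZ x) = iotaZ (φ x) := by
  induction x using FreeGroup.induction_on <;> simp_all [hatPhiF, iotaZ]

@[simp]
theorem hatPsiF_iotaZ (ψ : FreeGroup α →* FreeGroup β) (x : FreeGroup α) :
    hatPsiF ψ (iotaZ x) = iotaZ (ψ x) := by
  induction x using FreeGroup.induction_on <;> simp_all [hatPsiF, iotaZ]

@[simp]
theorem hatPhiF_zGen (φ : FreeGroup α →* FreeGroup β) (u : FreeGroup β) :
    hatPhiF φ u (zGen α) = iotaZ u * zGen β * (iotaZ u)⁻¹ := by
  simp [hatPhiF, zGen]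

@[simp]
theorem hatPsiF_zGen (ψ : FreeGroup α →* FreeGroup β) : hatPsiF ψ (zGen α) = zGen β := by
  simp [hatPsiF, zGen]

theorem conj_zGen_mem_eqSubgroup {φ ψ : FreeGroup α →* FreeGroup β} {u v : FreeGroup β}
    {g : FreeGroup α} (hg : v = φ g * u * (ψ g)⁻¹) :
    iotaZ g * zGen α * (iotaZ g)⁻¹ ∈ eqSubgroup (conjHom (hatPhiF φ u) (iotaZ v)) (hatPsiF ψ) := by
  have hψ : ψ g = v⁻¹ * φ g * u := by rw [hg]; group
  show conjHom _ _ _ = _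
  simp [hψ, mul_assoc]

theorem conj_zGen_ne_one (g : FreeGroup α) : iotaZ g * zGen α * (iotaZ g)⁻¹ ≠ 1 := by
  simp [zGen]

end Hat

/-- If `φ̂ᵤᵛ ∗ ψ̂ : Ĝ ∗ Ĝ → Ĥ` has remnant, then `u` and `v` lie in
different doubly-twisted conjugacy classes. -/
theorem classes_distinct_of_hat_hasRemnant {n : ℕ} {β : Type*} [DecidableEq β]
    (φ ψ : FreeGroup (Fin n) →* FreeGroup β) (u v : FreeGroup β)
    (h : HasRemnant (prodHom (conjHom (hatPhiF φ u) (iotaZ v)) (hatPsiF ψ))) :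
    ¬ ∃ g : FreeGroup (Fin n), v = φ g * u * (ψ g)⁻¹ := by
  rintro ⟨g, hg⟩
  have hmem := conj_zGen_mem_eqSubgroup hg
  rw [eqSubgroup_eq_bot_of_hasRemnant_prodHom _ _ h, Subgroup.mem_bot] at hmem
  exact conj_zGen_ne_one g hmem
end

section
/- Let G be a free group with basis g₁, …, g_n, let H be a free group, let φ, ψ : G → H be homomorphisms, and let u, v ∈ H be distinct. Let φ^v(g) = v⁻¹ φ(g) v. Suppose φ^v ∗ ψ : G ∗ G → H has remnant, and that for each generator g of G ∗ G the remnant word Rem_{φ^v ∗ ψ}(g) does not fully cancel in the reduced form of either product ((φ^v ∗ ψ)(g)) · v⁻¹u and u⁻¹v · ((φ^v ∗ ψ)(g)). Let Ĝ = G ∗ ⟨z⟩, Ĥ = H ∗ ⟨z⟩, let φ̂_u extend φ with φ̂_u(z) = u z u⁻¹, let ψ̂ extend ψ with ψ̂(z) = z, and let φ̂_u^v(x) = v⁻¹ φ̂_u(x) v. Then the homomorphism φ̂_u^v ∗ ψ̂ : Ĝ ∗ Ĝ → Ĥ has remnant. -/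
/-! Basic definitions: cancellation in products of reduced words, remnant
of a homomorphism of free groups, and assorted constructions. -/

open FreeGroup

/-! The images of the two new generators are `s z s⁻¹` (with `s = v⁻¹u ≠ 1`) and `z`; their
`z`-letters never cancel against any other image, so those generators keep the letter `z` as
remnant. An old generator `x = η(c)` gains new neighbours only through `s z s⁻¹` and `z`, which
cancel at most `cancel s⁻¹ x` letters on its left and `cancel x s` on its right; the survival
hypotheses bound each of these against the opposite maximal cancellation. The case where both
are maximal is handled by the tree (`0`-hyperbolicity) inequality
`min (cancel x s) (cancel s⁻¹ x) ≤ cancel x x`, and `cancel x x` is itself one of the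
cancellations counted by `maxLeftCancel` and `maxRightCancel`. -/

namespace FreeGroup

variable {γ : Type*} [DecidableEq γ]

theorem norm_mk_of_isReduced {L : List (γ × Bool)} (h : IsReduced L) :
    norm (mk L) = L.length := by
  rw [norm, toWord_mk, h.reduce_eq]

theorem toWord_mul_of_norm_mul {x y : FreeGroup γ} (h : norm (x * y) = norm x + norm y) :
    (x * y).toWord = x.toWord ++ y.toWord :=
  (toWord_mul_sublist x y).eq_of_length (by simpa [norm] using h)

theorem toWord_isPrefix_of_norm_mul {x y : FreeGroup γ} (h : norm (x * y) = norm x + norm y) :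
    x.toWord <+: (x * y).toWord :=
  toWord_mul_of_norm_mul h ▸ List.prefix_append _ _

theorem exists_eq_mul_of_toWord_isPrefix {p q : FreeGroup γ} (h : p.toWord <+: q.toWord) :
    ∃ t, q = p * t ∧ norm q = norm p + norm t := by
  obtain ⟨T, hT⟩ := h
  have hTred : IsReduced T := isReduced_toWord.infix (hT ▸ (List.suffix_append _ _).isInfix)
  refine ⟨mk T, ?_, ?_⟩
  · rw [← mk_toWord (x := q), ← hT, ← mul_mk, mk_toWord]
  · rw [norm_mk_of_isReduced hTred, norm, norm, ← hT, List.length_append]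

theorem exists_mul_letter_of_not_isReduced {x y : FreeGroup γ}
    (h : ¬IsReduced (x.toWord ++ y.toWord)) :
    ∃ (x' y' : FreeGroup γ) (a : γ × Bool), x = x' * mk [a] ∧ y = (mk [a])⁻¹ * y' ∧
      norm x = norm x' + 1 ∧ norm y = norm y' + 1 := by
  have hjunction : ¬∀ a ∈ x.toWord.getLast?, ∀ b ∈ y.toWord.head?, a.1 = b.1 → a.2 = b.2 :=
    fun h' => h (List.isChain_append.2 ⟨isReduced_toWord, isReduced_toWord, h'⟩)
  push Not at hjunction
  obtain ⟨a, ha, b, hb, hab, hne⟩ := hjunction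
  have hb' : b = (a.1, !a.2) := by
    obtain ⟨a₁, a₂⟩ := a; obtain ⟨b₁, b₂⟩ := b
    cases a₂ <;> cases b₂ <;> simp_all
  have hx := List.dropLast_append_getLast? a ha
  have hy := List.eq_cons_of_mem_head? hb
  refine ⟨mk x.toWord.dropLast, mk y.toWord.tail, a, ?_, ?_, ?_, ?_⟩
  · rw [mul_mk, hx, mk_toWord]
  · rw [inv_mk, mul_mk]
    conv_lhs => rw [← mk_toWord (x := y), hy, hb']
    rfl
  · rw [norm_mk_of_isReduced (isReduced_toWord.infix (List.dropLast_prefix _).isInfix), norm]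
    conv_lhs => rw [← hx]
    rw [List.length_append, List.length_singleton]
  · rw [norm_mk_of_isReduced (isReduced_toWord.infix (List.tail_suffix _).isInfix), norm]
    conv_lhs => rw [hy]
    rw [List.length_cons]

theorem exists_cancel_decomposition (x y : FreeGroup γ) :
    ∃ x₁ d y₂ : FreeGroup γ, x = x₁ * d ∧ y = d⁻¹ * y₂ ∧
      norm x = norm x₁ + norm d ∧ norm y = norm d + norm y₂ ∧
      norm (x * y) = norm x₁ + norm y₂ := by
  obtain ⟨k, hk⟩ : ∃ k, norm x = k := ⟨_, rfl⟩
  induction k generalizing x y with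
  | zero =>
    obtain rfl := norm_eq_zero.mp hk
    exact ⟨1, 1, y, by simp, by simp, by simp, by simp, by simp⟩
  | succ k ih =>
    by_cases hred : IsReduced (x.toWord ++ y.toWord)
    · refine ⟨x, 1, y, by simp, by simp, by simp, by simp, ?_⟩
      rw [norm, toWord_mul, hred.reduce_eq, List.length_append]
      rfl
    obtain ⟨x', y', a, rfl, rfl, hx, hy⟩ := exists_mul_letter_of_not_isReduced hred
    obtain ⟨x₁, d, y₂, rfl, rfl, hx', hy', hxy'⟩ := ih x' y' (by omega)
    have ha : norm (mk [a]) = 1 := norm_mk_of_isReduced .singleton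
    have hd := norm_mul_le d (mk [a])
    have hx₁ := norm_mul_le x₁ (d * mk [a])
    have hy₂ := norm_mul_le (d * mk [a])⁻¹ y₂
    rw [← mul_assoc] at hx₁
    rw [norm_inv_eq, mul_inv_rev, mul_assoc] at hy₂
    refine ⟨x₁, d * mk [a], y₂, by group, by group, by omega, by omega, ?_⟩
    rw [show x₁ * d * mk [a] * ((mk [a])⁻¹ * (d⁻¹ * y₂)) = x₁ * d * (d⁻¹ * y₂) by group, hxy']

end FreeGroup

section Cancel

variable {γ : Type*} [DecidableEq γ]

theorem cancel_inv_inv (a b : FreeGroup γ) : cancel b⁻¹ a⁻¹ = cancel a b := by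
  rw [cancel, cancel, ← mul_inv_rev, norm_inv_eq, norm_inv_eq, norm_inv_eq, Nat.add_comm (norm b)]

theorem cancel_le_norm_left (a b : FreeGroup γ) : cancel a b ≤ norm a := by
  have := norm_mul_le a⁻¹ (a * b)
  rw [inv_mul_cancel_left, norm_inv_eq] at this
  unfold cancel
  omega

theorem cancel_le_norm_right (a b : FreeGroup γ) : cancel a b ≤ norm b := by
  simpa only [cancel_inv_inv, norm_inv_eq] using cancel_le_norm_left b⁻¹ a⁻¹

@[simp]
theorem cancel_one_left (b : FreeGroup γ) : cancel 1 b = 0 := by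
  simp [cancel]

@[simp]
theorem cancel_one_right (a : FreeGroup γ) : cancel a 1 = 0 := by
  simp [cancel]

theorem cancel_eq_cancel_of_norm_add {γ' : Type*} [DecidableEq γ'] {X Y : FreeGroup γ}
    {x y : FreeGroup γ'} {C : ℕ} (h : norm X + norm Y = norm x + norm y + C)
    (hmul : norm (X * Y) = norm (x * y) + C) : cancel X Y = cancel x y := by
  rw [cancel, cancel, h, hmul, Nat.add_sub_add_right]

theorem cancel_le_cancel_of_cancel_le {a b c : FreeGroup γ} (h : cancel a b ≤ cancel b⁻¹ c) :
    cancel a b ≤ cancel a c := by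
  obtain ⟨a₁, d, b₂, rfl, hb, ha, hbn, hab⟩ := exists_cancel_decomposition a b
  obtain ⟨b₁, e, c₂, hb', rfl, hbn', hc, hbc⟩ := exists_cancel_decomposition b⁻¹ c
  rw [norm_inv_eq] at hbn'
  have hd : cancel (a₁ * d) b = norm d := by unfold cancel; omega
  have he : cancel b⁻¹ (e⁻¹ * c₂) = norm e := by unfold cancel; rw [norm_inv_eq]; omega
  rw [hd, he] at h
  -- `d⁻¹` and `e⁻¹` are both prefixes of the reduced word of `b`, so `e⁻¹ = d⁻¹ t` and the
  -- product `a * c` reduces to `a₁ t c₂`.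
  have hpd : d⁻¹.toWord <+: b.toWord :=
    hb ▸ toWord_isPrefix_of_norm_mul (by rw [← hb, norm_inv_eq]; exact hbn)
  have hpe : e⁻¹.toWord <+: b.toWord := by
    have hbe : b = e⁻¹ * b₁⁻¹ := by rw [← mul_inv_rev, ← hb', inv_inv]
    exact hbe ▸ toWord_isPrefix_of_norm_mul (by rw [← hbe, norm_inv_eq, norm_inv_eq]; omega)
  have hde : d⁻¹.toWord.length ≤ e⁻¹.toWord.length :=
    show norm d⁻¹ ≤ norm e⁻¹ by rwa [norm_inv_eq, norm_inv_eq]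
  obtain ⟨t, hedt, hnt⟩ :=
    exists_eq_mul_of_toWord_isPrefix (List.prefix_of_prefix_length_le hpd hpe hde)
  rw [norm_inv_eq, norm_inv_eq] at hnt
  have hac : a₁ * d * (e⁻¹ * c₂) = a₁ * (t * c₂) := by rw [hedt]; group
  have := norm_mul_le a₁ (t * c₂)
  have := norm_mul_le t c₂
  rw [hd, cancel, hac]
  omega

/-- `cancel a b` is the Gromov product `(a⁻¹ | b)₁` in the Cayley tree of the free group, hence
`0`-hyperbolic. -/
theorem min_cancel_le_cancel (a b c : FreeGroup γ) :
    min (cancel a b) (cancel b⁻¹ c) ≤ cancel a c := by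
  rcases le_total (cancel a b) (cancel b⁻¹ c) with h | h
  · exact (min_le_left _ _).trans (cancel_le_cancel_of_cancel_le h)
  · have hcb : cancel c⁻¹ b = cancel b⁻¹ c := by rw [← cancel_inv_inv, inv_inv]
    have := @cancel_le_cancel_of_cancel_le _ _ c⁻¹ b a⁻¹
    rw [cancel_inv_inv, cancel_inv_inv, hcb] at this
    exact (min_le_right _ _).trans (this h)

end Cancel

section ZExtension

variable {β : Type*}

theorem iotaZ_eq_map : (iotaZ : FreeGroup β →* FreeGroup (β ⊕ Unit)) = map Sum.inl :=
  ext_hom _ _ fun _ => by simp [iotaZ]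

theorem bpow_iotaZ (g : FreeGroup β) (e : Bool) : bpow (iotaZ g) e = iotaZ (bpow g e) := by
  cases e <;> simp [bpow]

def zSandwich (a : FreeGroup β) (e : Bool) (b : FreeGroup β) : FreeGroup (β ⊕ Unit) :=
  iotaZ a * bpow (zGen β) e * iotaZ b

theorem bpow_zSandwich (a : FreeGroup β) (e : Bool) :
    bpow (zSandwich a true a⁻¹) e = zSandwich a e a⁻¹ := by
  cases e
  · simp [zSandwich, bpow, mul_assoc]
  · rfl

theorem bpow_zGen (e : Bool) : bpow (zGen β) e = mk [((Sum.inr () : β ⊕ Unit), e)] := by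
  cases e <;> rfl

variable [DecidableEq β]

theorem toWord_iotaZ (x : FreeGroup β) :
    (iotaZ x).toWord = x.toWord.map fun p => ((Sum.inl p.1 : β ⊕ Unit), p.2) := by
  have hred : FreeGroup.IsReduced (x.toWord.map fun p => ((Sum.inl p.1 : β ⊕ Unit), p.2)) := by
    simpa [FreeGroup.IsReduced, List.isChain_map] using (isReduced_toWord (x := x))
  conv_lhs => rw [← mk_toWord (x := x)]
  rw [iotaZ_eq_map, map.mk, toWord_mk, hred.reduce_eq]

theorem norm_iotaZ (x : FreeGroup β) : norm (iotaZ x) = norm x := by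
  rw [FreeGroup.norm, FreeGroup.norm, toWord_iotaZ, List.length_map]

theorem cancel_iotaZ_iotaZ (g g' : FreeGroup β) :
    cancel (iotaZ g) (iotaZ g') = cancel g g' := by
  rw [cancel, cancel, ← _root_.map_mul, norm_iotaZ, norm_iotaZ, norm_iotaZ]

theorem toWord_iotaZ_mul_bpow_zGen_mul (a : FreeGroup β) (e : Bool) {w : FreeGroup (β ⊕ Unit)}
    (hw : ∀ p ∈ w.toWord.head?, p.1 = Sum.inr () → p.2 = e) :
    (iotaZ a * bpow (zGen β) e * w).toWord = (iotaZ a).toWord ++ (Sum.inr (), e) :: w.toWord := by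
  have hred : FreeGroup.IsReduced ((iotaZ a).toWord ++ (Sum.inr (), e) :: w.toWord) := by
    refine List.isChain_append.2 ⟨isReduced_toWord, List.isChain_cons.2
      ⟨fun p hp h => (hw p hp h.symm).symm, isReduced_toWord⟩, ?_⟩
    simp [toWord_iotaZ, List.getLast?_map]
  rw [bpow_zGen, ← mk_toWord (x := iotaZ a), ← mk_toWord (x := w), mul_mk, mul_mk, toWord_mk,
    mk_toWord, mk_toWord, List.append_assoc, List.singleton_append, hred.reduce_eq]

theorem toWord_zSandwich (a : FreeGroup β) (e : Bool) (b : FreeGroup β) :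
    (zSandwich a e b).toWord = (iotaZ a).toWord ++ (Sum.inr (), e) :: (iotaZ b).toWord :=
  toWord_iotaZ_mul_bpow_zGen_mul a e (by simp [toWord_iotaZ, List.head?_map])

theorem norm_zSandwich (a : FreeGroup β) (e : Bool) (b : FreeGroup β) :
    norm (zSandwich a e b) = norm a + 1 + norm b := by
  rw [← norm_iotaZ a, ← norm_iotaZ b, FreeGroup.norm, toWord_zSandwich, List.length_append,
    List.length_cons, FreeGroup.norm, FreeGroup.norm]
  omega

theorem norm_zSandwich_mul_zSandwich (a b a' b' : FreeGroup β) {e e' : Bool}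
    (h : b * a' ≠ 1 ∨ e = e') :
    norm (zSandwich a e b * zSandwich a' e' b') = norm a + norm (b * a') + norm b' + 2 := by
  have hprod : zSandwich a e b * zSandwich a' e' b' =
      iotaZ a * bpow (zGen β) e * zSandwich (b * a') e' b' := by
    simp only [zSandwich, _root_.map_mul, mul_assoc]
  have hhead : ∀ p ∈ (zSandwich (b * a') e' b').toWord.head?, p.1 = Sum.inr () → p.2 = e := by
    rw [toWord_zSandwich]
    cases hM : (iotaZ (b * a')).toWord with
    | nil =>
      have hm : b * a' = 1 := by
        rw [← FreeGroup.norm_eq_zero, ← norm_iotaZ, FreeGroup.norm, hM, List.length_nil]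
      simp [h.resolve_left (not_not.2 hm)]
    | cons q L =>
      have hq : q ∈ (iotaZ (b * a')).toWord := hM ▸ List.mem_cons_self
      rw [toWord_iotaZ] at hq
      obtain ⟨r, -, rfl⟩ := List.mem_map.1 hq
      simp
  have hm := norm_zSandwich (b * a') e' b'
  have ha := norm_iotaZ a
  rw [hprod, FreeGroup.norm, toWord_iotaZ_mul_bpow_zGen_mul a e hhead, List.length_append,
    List.length_cons]
  simp only [FreeGroup.norm] at hm ha ⊢
  omega

theorem cancel_iotaZ_zSandwich (g a : FreeGroup β) (e : Bool) (b : FreeGroup β) :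
    cancel (iotaZ g) (zSandwich a e b) = cancel g a := by
  have hmul : iotaZ g * zSandwich a e b = zSandwich (g * a) e b := by
    simp only [zSandwich, _root_.map_mul, mul_assoc]
  refine cancel_eq_cancel_of_norm_add (C := 1 + norm b) ?_ ?_
  · rw [norm_iotaZ, norm_zSandwich]; omega
  · rw [hmul, norm_zSandwich]; omega

theorem cancel_zSandwich_iotaZ (a : FreeGroup β) (e : Bool) (b g : FreeGroup β) :
    cancel (zSandwich a e b) (iotaZ g) = cancel b g := by
  have hmul : zSandwich a e b * iotaZ g = zSandwich a e (b * g) := by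
    simp only [zSandwich, _root_.map_mul, mul_assoc]
  refine cancel_eq_cancel_of_norm_add (C := norm a + 1) ?_ ?_
  · rw [norm_iotaZ, norm_zSandwich]; omega
  · rw [hmul, norm_zSandwich]; omega

theorem cancel_zSandwich_zSandwich (a b a' b' : FreeGroup β) {e e' : Bool}
    (h : b * a' ≠ 1 ∨ e = e') :
    cancel (zSandwich a e b) (zSandwich a' e' b') = cancel b a' := by
  refine cancel_eq_cancel_of_norm_add (C := norm a + norm b' + 2) ?_ ?_
  · rw [norm_zSandwich, norm_zSandwich]; omega
  · rw [norm_zSandwich_mul_zSandwich a b a' b' h]; omega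

end ZExtension

section MaxCancel

variable {α β : Type*} [Fintype α] [DecidableEq α] [DecidableEq β]
  (η : FreeGroup α →* FreeGroup β) {i j : α} {ε : Bool} {m : ℕ}

theorem cancel_le_maxLeftCancel (h : (j, ε) ≠ (i, false)) :
    cancel (bpow (η (of j)) ε) (η (of i)) ≤ maxLeftCancel η i :=
  Finset.le_sup (f := fun je : α × Bool => cancel (bpow (η (of je.1)) je.2) (η (of i)))
    (Finset.mem_filter.2 ⟨Finset.mem_univ (j, ε), h⟩)

theorem cancel_le_maxRightCancel (h : (j, ε) ≠ (i, false)) :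
    cancel (η (of i)) (bpow (η (of j)) ε) ≤ maxRightCancel η i :=
  Finset.le_sup (f := fun je : α × Bool => cancel (η (of i)) (bpow (η (of je.1)) je.2))
    (Finset.mem_filter.2 ⟨Finset.mem_univ (j, ε), h⟩)

theorem maxLeftCancel_le
    (h : ∀ j ε, (j, ε) ≠ (i, false) → cancel (bpow (η (of j)) ε) (η (of i)) ≤ m) :
    maxLeftCancel η i ≤ m :=
  Finset.sup_le fun je hje => h je.1 je.2 (by simpa using hje)

theorem maxRightCancel_le
    (h : ∀ j ε, (j, ε) ≠ (i, false) → cancel (η (of i)) (bpow (η (of j)) ε) ≤ m) :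
    maxRightCancel η i ≤ m :=
  Finset.sup_le fun je hje => h je.1 je.2 (by simpa using hje)

theorem cancel_self_le_min_maxCancel (i : α) :
    cancel (η (of i)) (η (of i)) ≤ min (maxLeftCancel η i) (maxRightCancel η i) :=
  le_min (cancel_le_maxLeftCancel η (j := i) (ε := true) (by simp))
    (cancel_le_maxRightCancel η (j := i) (ε := true) (by simp))

end MaxCancel

section ZExtensionHom

variable {α β : Type*}

theorem sum_unit_cases (j : (α ⊕ Unit) ⊕ (α ⊕ Unit)) :
    (∃ c, j = Sum.map Sum.inl Sum.inl c) ∨ j = Sum.inl (Sum.inr ()) ∨ j = Sum.inr (Sum.inr ()) := by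
  rcases j with (c | ⟨⟩) | (c | ⟨⟩)
  exacts [.inl ⟨.inl c, rfl⟩, .inr (.inl rfl), .inl ⟨.inr c, rfl⟩, .inr (.inr rfl)]

structure IsZExtension (η : FreeGroup (α ⊕ α) →* FreeGroup β)
    (η' : FreeGroup ((α ⊕ Unit) ⊕ (α ⊕ Unit)) →* FreeGroup (β ⊕ Unit)) (s : FreeGroup β) :
    Prop where
  apply_old : ∀ c, η' (of (Sum.map Sum.inl Sum.inl c)) = iotaZ (η (of c))
  apply_zLeft : η' (of (Sum.inl (Sum.inr ()))) = zSandwich s true s⁻¹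
  apply_zRight : η' (of (Sum.inr (Sum.inr ()))) = zSandwich 1 true 1

namespace IsZExtension

variable {η : FreeGroup (α ⊕ α) →* FreeGroup β}
  {η' : FreeGroup ((α ⊕ Unit) ⊕ (α ⊕ Unit)) →* FreeGroup (β ⊕ Unit)} {s : FreeGroup β}

theorem bpow_old (h : IsZExtension η η' s) (c : α ⊕ α) (ε : Bool) :
    bpow (η' (of (Sum.map Sum.inl Sum.inl c))) ε = iotaZ (bpow (η (of c)) ε) := by
  rw [h.apply_old, bpow_iotaZ]

theorem bpow_zLeft (h : IsZExtension η η' s) (ε : Bool) :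
    bpow (η' (of (Sum.inl (Sum.inr ())))) ε = zSandwich s ε s⁻¹ := by
  rw [h.apply_zLeft, bpow_zSandwich]

theorem bpow_zRight (h : IsZExtension η η' s) (ε : Bool) :
    bpow (η' (of (Sum.inr (Sum.inr ())))) ε = zSandwich 1 ε 1 := by
  simpa using h.apply_zRight ▸ bpow_zSandwich (1 : FreeGroup β) ε

variable [Fintype α] [DecidableEq α] [DecidableEq β]

theorem maxLeftCancel_old_le (h : IsZExtension η η' s) (c : α ⊕ α) :
    maxLeftCancel η' (Sum.map Sum.inl Sum.inl c) ≤
      max (maxLeftCancel η c) (cancel s⁻¹ (η (of c))) := by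
  refine maxLeftCancel_le η' fun j ε hj => ?_
  rw [h.apply_old]
  rcases sum_unit_cases j with ⟨c', rfl⟩ | rfl | rfl
  · rw [h.bpow_old, cancel_iotaZ_iotaZ]
    exact le_max_of_le_left <| cancel_le_maxLeftCancel η <|
      ne_of_apply_ne (Prod.map (Sum.map Sum.inl Sum.inl) id) hj
  · rw [h.bpow_zLeft, cancel_zSandwich_iotaZ]
    exact le_max_right _ _
  · rw [h.bpow_zRight, cancel_zSandwich_iotaZ, cancel_one_left]
    exact Nat.zero_le _

theorem maxRightCancel_old_le (h : IsZExtension η η' s) (c : α ⊕ α) :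
    maxRightCancel η' (Sum.map Sum.inl Sum.inl c) ≤
      max (maxRightCancel η c) (cancel (η (of c)) s) := by
  refine maxRightCancel_le η' fun j ε hj => ?_
  rw [h.apply_old]
  rcases sum_unit_cases j with ⟨c', rfl⟩ | rfl | rfl
  · rw [h.bpow_old, cancel_iotaZ_iotaZ]
    exact le_max_of_le_left <| cancel_le_maxRightCancel η <|
      ne_of_apply_ne (Prod.map (Sum.map Sum.inl Sum.inl) id) hj
  · rw [h.bpow_zLeft, cancel_iotaZ_zSandwich]
    exact le_max_right _ _
  · rw [h.bpow_zRight, cancel_iotaZ_zSandwich, cancel_one_right]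
    exact Nat.zero_le _

theorem maxLeftCancel_zLeft_le (h : IsZExtension η η' s) (hs : s ≠ 1) :
    maxLeftCancel η' (Sum.inl (Sum.inr ())) ≤ norm s := by
  refine maxLeftCancel_le η' fun j ε hj => ?_
  rw [h.apply_zLeft]
  rcases sum_unit_cases j with ⟨c', rfl⟩ | rfl | rfl
  · rw [h.bpow_old, cancel_iotaZ_zSandwich]
    exact cancel_le_norm_right _ _
  · obtain rfl : ε = true := by simpa using hj
    rw [h.bpow_zLeft, cancel_zSandwich_zSandwich _ _ _ _ (.inr rfl)]
    exact cancel_le_norm_right _ _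
  · rw [h.bpow_zRight, cancel_zSandwich_zSandwich _ _ _ _ (.inl (by simpa using hs)),
      cancel_one_left]
    exact Nat.zero_le _

theorem maxRightCancel_zLeft_le (h : IsZExtension η η' s) (hs : s ≠ 1) :
    maxRightCancel η' (Sum.inl (Sum.inr ())) ≤ norm s := by
  refine maxRightCancel_le η' fun j ε hj => ?_
  rw [h.apply_zLeft, ← norm_inv_eq]
  rcases sum_unit_cases j with ⟨c', rfl⟩ | rfl | rfl
  · rw [h.bpow_old, cancel_zSandwich_iotaZ]
    exact cancel_le_norm_left _ _
  · obtain rfl : ε = true := by simpa using hj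
    rw [h.bpow_zLeft, cancel_zSandwich_zSandwich _ _ _ _ (.inr rfl)]
    exact cancel_le_norm_left _ _
  · rw [h.bpow_zRight, cancel_zSandwich_zSandwich _ _ _ _ (.inl (by simpa using hs)),
      cancel_one_right]
    exact Nat.zero_le _

theorem maxLeftCancel_zRight_eq_zero (h : IsZExtension η η' s) (hs : s ≠ 1) :
    maxLeftCancel η' (Sum.inr (Sum.inr ())) = 0 := by
  refine Nat.eq_zero_of_le_zero <| maxLeftCancel_le η' fun j ε hj => ?_
  rw [h.apply_zRight]
  rcases sum_unit_cases j with ⟨c', rfl⟩ | rfl | rfl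
  · rw [h.bpow_old, cancel_iotaZ_zSandwich, cancel_one_right]
  · rw [h.bpow_zLeft, cancel_zSandwich_zSandwich _ _ _ _ (.inl (by simpa using hs)),
      cancel_one_right]
  · obtain rfl : ε = true := by simpa using hj
    rw [h.bpow_zRight, cancel_zSandwich_zSandwich _ _ _ _ (.inr rfl), cancel_one_right]

theorem maxRightCancel_zRight_eq_zero (h : IsZExtension η η' s) (hs : s ≠ 1) :
    maxRightCancel η' (Sum.inr (Sum.inr ())) = 0 := by
  refine Nat.eq_zero_of_le_zero <| maxRightCancel_le η' fun j ε hj => ?_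
  rw [h.apply_zRight]
  rcases sum_unit_cases j with ⟨c', rfl⟩ | rfl | rfl
  · rw [h.bpow_old, cancel_zSandwich_iotaZ, cancel_one_left]
  · rw [h.bpow_zLeft, cancel_zSandwich_zSandwich _ _ _ _ (.inl (by simpa using hs)),
      cancel_one_left]
  · obtain rfl : ε = true := by simpa using hj
    rw [h.bpow_zRight, cancel_zSandwich_zSandwich _ _ _ _ (.inr rfl), cancel_one_left]

theorem hasRemnant (h : IsZExtension η η' s) (hs : s ≠ 1) (hrem : HasRemnant η)
    (hR : ∀ c, remnantSurvivesRightMul η c s) (hL : ∀ c, remnantSurvivesLeftMul η c s⁻¹) :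
    HasRemnant η' := by
  intro i
  rcases sum_unit_cases i with ⟨c, rfl⟩ | rfl | rfl
  · have hself := cancel_self_le_min_maxCancel η c
    have hmin := min_cancel_le_cancel (η (of c)) s (η (of c))
    have hleft := h.maxLeftCancel_old_le c
    have hright := h.maxRightCancel_old_le c
    have hremc : maxLeftCancel η c + maxRightCancel η c < norm (η (of c)) := hrem c
    have hRc : cancel (η (of c)) s + maxLeftCancel η c < norm (η (of c)) := hR c
    have hLc : cancel s⁻¹ (η (of c)) + maxRightCancel η c < norm (η (of c)) := hL c
    rw [h.apply_old, norm_iotaZ]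
    omega
  · have hleft := h.maxLeftCancel_zLeft_le hs
    have hright := h.maxRightCancel_zLeft_le hs
    rw [h.apply_zLeft, norm_zSandwich, norm_inv_eq]
    omega
  · rw [h.maxLeftCancel_zRight_eq_zero hs, h.maxRightCancel_zRight_eq_zero hs, h.apply_zRight,
      norm_zSandwich]
    simp

end IsZExtension

end ZExtensionHom

theorem isZExtension_hat {α β : Type*} (φ ψ : FreeGroup α →* FreeGroup β) (u v : FreeGroup β) :
    IsZExtension (prodHom (conjHom φ v) ψ) (prodHom (conjHom (hatPhiF φ u) (iotaZ v)) (hatPsiF ψ))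
      (v⁻¹ * u) where
  apply_old c := by
    rcases c with c | c <;> simp [prodHom, conjHom, hatPhiF, hatPsiF]
  apply_zLeft := by
    simp [prodHom, conjHom, hatPhiF, zSandwich, bpow, mul_assoc]
  apply_zRight := by
    simp [prodHom, hatPsiF, zSandwich, bpow]

/-- If `u ≠ v`, `φᵛ ∗ ψ` has remnant, and for each generator `c` of
`G ∗ G` the remnant `Rem_{φᵛ ∗ ψ}(c)` does not fully cancel in the reduced forms of
`((φᵛ ∗ ψ)(c)) ⬝ v⁻¹u` and `u⁻¹v ⬝ ((φᵛ ∗ ψ)(c))`, then `φ̂ᵤᵛ ∗ ψ̂ : Ĝ ∗ Ĝ → Ĥ`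
has remnant. -/
theorem hat_hasRemnant_of_remnant_survives {n : ℕ} {β : Type*} [DecidableEq β]
    (φ ψ : FreeGroup (Fin n) →* FreeGroup β) (u v : FreeGroup β) (huv : u ≠ v)
    (hrem : HasRemnant (prodHom (conjHom φ v) ψ))
    (hR : ∀ c : Fin n ⊕ Fin n,
      remnantSurvivesRightMul (prodHom (conjHom φ v) ψ) c (v⁻¹ * u))
    (hL : ∀ c : Fin n ⊕ Fin n,
      remnantSurvivesLeftMul (prodHom (conjHom φ v) ψ) c (u⁻¹ * v)) :
    HasRemnant (prodHom (conjHom (hatPhiF φ u) (iotaZ v)) (hatPsiF ψ)) := by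
  have hs : v⁻¹ * u ≠ 1 := by rwa [Ne, inv_mul_eq_one, eq_comm]
  refine (isZExtension_hat φ ψ u v).hasRemnant hs hrem hR ?_
  simpa only [mul_inv_rev, inv_inv] using hL
end
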